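/- Let α > −1 and n ∈ ℕ with n ≥ 4, and suppose L_{n−1}^{(α+4)} and L_n^{(α)} have no common zeros. Let 0 < x_1 < ⋯ < x_n be the zeros of L_n^{(α)}, let 0 < X_1 < ⋯ < X_{n−1} be the zeros of L_{n−1}^{(α+4)}, and let q_+ be the (unique) positive root of the quadratic equation n·x² + 2n(α+2)·x − (α+1)(α+2)(α+3) = 0. If q_+ < x_1 or q_+ > x_n, then the zeros of L_{n−1}^{(α+4)} interlace with the zeros of L_n^{(α)}: x_1 < X_1 < x_2 < X_2 < ⋯ < X_{n−1} < x_n. -/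

import Mathlib

open Polynomial

/-- The generalized Laguerre polynomial `L_n^{(α)}(x) =
∑_{k=0}^{n} (−1)^k [∏_{j=k+1}^{n}(α+j)] / ((n−k)!·k!) · x^k`. -/
noncomputable def laguerre (α : ℝ) (n : ℕ) : Polynomial ℝ :=
  ∑ k ∈ Finset.range (n + 1),
    Polynomial.C ((-1 : ℝ) ^ k * (∏ j ∈ Finset.Icc (k + 1) n, (α + (j : ℝ))) /
      ((n - k).factorial * k.factorial)) * Polynomial.X ^ k

/-!
At a zero `t` of `L_n^{(α)}`, the contiguous relations of the Laguerre polynomials give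
`t³ L_{n-1}^{(α+4)}(t) = Q(t) (L_n^{(α)})'(t)` with `Q(t) = n t² + 2n(α+2) t - (α+1)(α+2)(α+3)`
(`interlacingQuadratic α n`). Writing `L_n^{(α)} = c ∏ⱼ (X - xⱼ)` shows that the derivative
alternates in sign along `x₁ < ⋯ < xₙ`, while `Q(t) = n (t - q₊)(t + q₊ + 2(α+2))` has constant
sign on them because `q₊ ∉ [x₁, xₙ]`. So `L_{n-1}^{(α+4)}` changes sign on each of the `n - 1`
gaps `(xᵢ, xᵢ₊₁)`; as it has only `n - 1` zeros, sending a gap to a zero inside it is a strictly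
increasing self-map of `{1, …, n - 1}`, hence the identity.
-/

open Finset

theorem eq_C_coeff_mul_nodal_of_eval_eq_zero {R ι : Type*} [CommRing R] [IsDomain R]
    {s : Finset ι} {v : ι → R} (hv : Set.InjOn v s) {p : R[X]} (hdeg : p.natDegree ≤ #s)
    (hroot : ∀ i ∈ s, p.eval (v i) = 0) :
    p = C (p.coeff #s) * Lagrange.nodal s v := by
  classical
  refine eq_of_degree_sub_lt_of_eval_finset_eq (s.image v) ?_ ?_
  · rw [card_image_of_injOn hv, degree_lt_iff_coeff_zero]
    intro k hk
    have hnodal : (Lagrange.nodal s v).natDegree = #s := Lagrange.natDegree_nodal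
    rcases hk.eq_or_lt with rfl | hk
    · rw [coeff_sub, coeff_C_mul, ← hnodal, Lagrange.nodal_monic.coeff_natDegree, hnodal,
        mul_one, sub_self]
    · rw [coeff_sub, coeff_C_mul, coeff_eq_zero_of_natDegree_lt (hdeg.trans_lt hk),
        coeff_eq_zero_of_natDegree_lt (p := Lagrange.nodal s v) (hnodal ▸ hk), mul_zero, sub_zero]
  · simp only [mem_image, forall_exists_index, and_imp]
    rintro _ i hi rfl
    rw [hroot i hi, eval_mul, Lagrange.eval_nodal_at_node hi, mul_zero]

theorem neg_one_pow_mul_prod_erase_sub_pos {x : ℕ → ℝ} {n i : ℕ}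
    (hx : StrictMonoOn x (Icc 1 n)) (hi : i ∈ Icc 1 n) :
    0 < (-1) ^ (n - i) * ∏ j ∈ (Icc 1 n).erase i, (x i - x j) := by
  have hsplit : (Icc 1 n).erase i = Ico 1 i ∪ Ioc i n := by
    ext j; simp only [mem_erase, mem_Icc, mem_union, mem_Ico, mem_Ioc] at hi ⊢; omega
  have hdisj : Disjoint (Ico 1 i) (Ioc i n) := by
    rw [disjoint_left]; intro j; simp only [mem_Ico, mem_Ioc]; omega
  have hmem : ∀ j ∈ Ico 1 i ∪ Ioc i n, j ∈ (Icc 1 n : Set ℕ) := by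
    intro j hj; rw [← hsplit] at hj; exact mem_coe.2 (mem_of_mem_erase hj)
  have hcard : #(Ioc i n) = n - i := Nat.card_Ioc i n
  rw [hsplit, prod_union hdisj, mul_left_comm, ← hcard, ← prod_neg]
  refine mul_pos (prod_pos fun j hj => ?_) (prod_pos fun j hj => ?_)
  · have := hx (hmem j (mem_union_left _ hj)) hi (mem_Ico.1 hj).2
    linarith
  · have := hx hi (hmem j (mem_union_right _ hj)) (mem_Ioc.1 hj).1
    linarith

theorem eval_derivative_mul_eval_derivative_succ_neg {p : ℝ[X]} {n : ℕ} {x : ℕ → ℝ}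
    (hp : p.coeff n ≠ 0) (hdeg : p.natDegree ≤ n) (hx : StrictMonoOn x (Icc 1 n))
    (hroot : ∀ i ∈ Icc 1 n, p.eval (x i) = 0) {i : ℕ} (hi : i ∈ Ico 1 n) :
    (derivative p).eval (x i) * (derivative p).eval (x (i + 1)) < 0 := by
  classical
  have hcard : #(Icc 1 n) = n := by simp
  set c := p.coeff n
  set P : ℕ → ℝ := fun k => ∏ j ∈ (Icc 1 n).erase k, (x k - x j)
  have hfac : p = C c * Lagrange.nodal (Icc 1 n) x := by
    simpa [hcard] using eq_C_coeff_mul_nodal_of_eval_eq_zero hx.injOn (hcard.symm ▸ hdeg) hroot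
  have heval : ∀ k ∈ Icc 1 n, (derivative p).eval (x k) = c * P k := fun k hk => by
    rw [hfac, derivative_C_mul, eval_C_mul, Lagrange.eval_nodal_derivative_eval_node_eq hk,
      Lagrange.eval_nodal]
  have hi₀ : i ∈ Icc 1 n := by simp only [mem_Ico, mem_Icc] at hi ⊢; omega
  have hi₁ : i + 1 ∈ Icc 1 n := by simp only [mem_Ico, mem_Icc] at hi ⊢; omega
  have hpow : (-1 : ℝ) ^ (n - i) * (-1) ^ (n - (i + 1)) = -1 := by
    rw [← pow_add, show n - i + (n - (i + 1)) = 2 * (n - (i + 1)) + 1 by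
      simp only [mem_Ico] at hi; omega, pow_succ, pow_mul]
    norm_num
  calc (derivative p).eval (x i) * (derivative p).eval (x (i + 1))
      = -(c ^ 2 * (((-1) ^ (n - i) * P i) * ((-1) ^ (n - (i + 1)) * P (i + 1)))) := by
        rw [heval i hi₀, heval (i + 1) hi₁]
        linear_combination (c ^ 2 * P i * P (i + 1)) * hpow
    _ < 0 := neg_neg_of_pos (mul_pos (sq_pos_of_ne_zero hp) (mul_pos
        (neg_one_pow_mul_prod_erase_sub_pos hx hi₀) (neg_one_pow_mul_prod_erase_sub_pos hx hi₁)))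

theorem exists_mem_Ioo_eq_zero_of_mul_neg {f : ℝ → ℝ} (hf : Continuous f) {a b : ℝ}
    (hab : a ≤ b) (h : f a * f b < 0) : ∃ t ∈ Set.Ioo a b, f t = 0 := by
  rcases mul_neg_iff.1 h with ⟨ha, hb⟩ | ⟨ha, hb⟩
  · exact intermediate_value_Ioo' hab hf.continuousOn ⟨hb, ha⟩
  · exact intermediate_value_Ioo hab hf.continuousOn ⟨ha, hb⟩

theorem forall_mem_Ioo_of_forall_exists_mem_Ioo {m : ℕ} {x X : ℕ → ℝ}
    (hx : MonotoneOn x (Icc 1 (m + 1))) (hX : StrictMonoOn X (Icc 1 m))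
    (h : ∀ i ∈ Icc 1 m, ∃ j ∈ Icc 1 m, X j ∈ Set.Ioo (x i) (x (i + 1))) :
    ∀ i ∈ Icc 1 m, X i ∈ Set.Ioo (x i) (x (i + 1)) := by
  choose! j hj hjX using h
  let J : Icc 1 m → Icc 1 m := fun i => ⟨j i, hj i i.2⟩
  have hJ : StrictMono J := by
    intro k l hkl
    have hk := mem_Icc.1 k.2
    have hl := mem_Icc.1 l.2
    have hxkl : x (k + 1) ≤ x l :=
      hx (by simp only [coe_Icc, Set.mem_Icc]; omega) (by simp only [coe_Icc, Set.mem_Icc]; omega)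
        (by exact hkl)
    have := (hjX k k.2).2.trans_le (hxkl.trans (hjX l l.2).1.le)
    exact (hX.lt_iff_lt (hj k k.2) (hj l l.2)).1 this
  intro i hi
  have hji : j i = i := congrArg Subtype.val (hJ.apply_eq (x := ⟨i, hi⟩))
  simpa only [hji] using hjX i hi

theorem laguerre_coeff_of_le {α : ℝ} {n k : ℕ} (h : k ≤ n) :
    (laguerre α n).coeff k =
      (-1) ^ k * (∏ j ∈ Icc (k + 1) n, (α + j)) / ((n - k).factorial * k.factorial) := by
  rw [laguerre, finsetSum_coeff, sum_eq_single k]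
  · simp
  · intro b _ hb; simp [hb.symm]
  · intro hk; exact absurd (mem_range.2 (Nat.lt_succ_of_le h)) hk

theorem laguerre_coeff_of_lt {α : ℝ} {n k : ℕ} (h : n < k) : (laguerre α n).coeff k = 0 := by
  rw [laguerre, finsetSum_coeff]
  refine sum_eq_zero fun b hb => ?_
  simp [show k ≠ b by rw [mem_range] at hb; omega]

theorem laguerre_coeff_self_ne_zero (α : ℝ) (n : ℕ) : (laguerre α n).coeff n ≠ 0 := by
  rw [laguerre_coeff_of_le le_rfl, Icc_eq_empty (by omega), prod_empty, Nat.sub_self]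
  simp [Nat.factorial_ne_zero]

theorem natDegree_laguerre_le (α : ℝ) (n : ℕ) : (laguerre α n).natDegree ≤ n :=
  natDegree_le_iff_coeff_eq_zero.2 fun _ hk => laguerre_coeff_of_lt (by exact_mod_cast hk)

theorem prod_Icc_add_one_add_one (α : ℝ) (a b : ℕ) :
    ∏ j ∈ Icc (a + 1) (b + 1), (α + j) = ∏ j ∈ Icc a b, (α + 1 + j) := by
  rw [← map_add_right_Icc a b 1, prod_map]
  refine prod_congr rfl fun j _ => ?_
  simp only [addRightEmbedding_apply, Nat.cast_add, Nat.cast_one]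
  ring

theorem prod_Icc_eq_mul_prod_Icc_add_one (α : ℝ) {a b : ℕ} (h : a ≤ b) :
    ∏ j ∈ Icc a b, (α + j) = (α + a) * ∏ j ∈ Icc (a + 1) b, (α + j) := by
  rw [Icc_eq_cons_Ioc h, prod_cons, Icc_add_one_left_eq_Ioc]

theorem laguerre_add_one_succ (α : ℝ) (m : ℕ) :
    laguerre (α + 1) (m + 1) = laguerre α (m + 1) + laguerre (α + 1) m := by
  ext k
  rw [coeff_add]
  rcases lt_trichotomy k (m + 1) with hk | rfl | hk
  · rw [laguerre_coeff_of_le hk.le, laguerre_coeff_of_le hk.le,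
      laguerre_coeff_of_le (Nat.le_of_lt_succ hk), prod_Icc_succ_top (by omega),
      prod_Icc_eq_mul_prod_Icc_add_one α (by omega : k + 1 ≤ m + 1), prod_Icc_add_one_add_one,
      show m + 1 - k = m - k + 1 by omega, Nat.factorial_succ]
    have : (m : ℝ) - k + 1 ≠ 0 := by
      have : (k : ℝ) ≤ m := by exact_mod_cast Nat.le_of_lt_succ hk
      linarith
    push_cast [Nat.cast_sub (Nat.le_of_lt_succ hk)]
    field_simp
    ring
  · rw [laguerre_coeff_of_le le_rfl, laguerre_coeff_of_le le_rfl,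
      laguerre_coeff_of_lt (Nat.lt_succ_self m), add_zero]
    simp
  · rw [laguerre_coeff_of_lt hk, laguerre_coeff_of_lt hk, laguerre_coeff_of_lt (by omega),
      add_zero]

theorem derivative_laguerre_succ (α : ℝ) (m : ℕ) :
    derivative (laguerre α (m + 1)) = -laguerre (α + 1) m := by
  ext k
  rw [coeff_derivative, coeff_neg]
  rcases le_or_gt k m with hk | hk
  · rw [laguerre_coeff_of_le (by omega), laguerre_coeff_of_le hk, prod_Icc_add_one_add_one,
      show m + 1 - (k + 1) = m - k by omega, Nat.factorial_succ]
    push_cast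
    field_simp
    ring
  · rw [laguerre_coeff_of_lt (by omega), laguerre_coeff_of_lt hk, neg_zero, zero_mul]

theorem X_mul_laguerre_add_one (α : ℝ) (m : ℕ) :
    X * laguerre (α + 1) m =
      C (m + α + 1) * laguerre α m - C ((m : ℝ) + 1) * laguerre α (m + 1) := by
  ext k
  rw [coeff_sub, coeff_C_mul, coeff_C_mul]
  rcases k with _ | k
  · rw [mul_coeff_zero, coeff_X_zero, zero_mul, laguerre_coeff_of_le (Nat.zero_le _),
      laguerre_coeff_of_le (Nat.zero_le _), prod_Icc_succ_top (by omega)]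
    simp only [Nat.sub_zero, Nat.factorial_succ]
    push_cast
    field_simp
    ring
  rw [coeff_X_mul]
  rcases lt_trichotomy k m with hk | rfl | hk
  · rw [laguerre_coeff_of_le hk.le, laguerre_coeff_of_le hk, laguerre_coeff_of_le (by omega),
      ← prod_Icc_add_one_add_one, prod_Icc_succ_top (by omega),
      show m - k = m - (k + 1) + 1 by omega, show m + 1 - (k + 1) = m - (k + 1) + 1 by omega,
      Nat.factorial_succ, Nat.factorial_succ k, pow_succ]
    have : (m : ℝ) - (k + 1) + 1 ≠ 0 := by
      have : (k : ℝ) < m := by exact_mod_cast hk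
      linarith
    simp only [Nat.succ_eq_add_one]
    push_cast [Nat.cast_sub hk]
    field_simp
    ring
  · rw [laguerre_coeff_of_le le_rfl, laguerre_coeff_of_lt (Nat.lt_succ_self k),
      laguerre_coeff_of_le le_rfl, Icc_eq_empty (by omega), Icc_eq_empty (by omega), Nat.sub_self,
      Nat.sub_self, Nat.factorial_succ]
    push_cast
    field_simp
    ring
  · rw [laguerre_coeff_of_lt hk, laguerre_coeff_of_lt (by omega), laguerre_coeff_of_lt (by omega)]
    ring

theorem X_mul_laguerre_add_two (α : ℝ) (m : ℕ) :
    X * laguerre (α + 2) m =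
      C (α + 1) * laguerre (α + 1) m - C ((m : ℝ) + 1) * laguerre α (m + 1) := by
  have hC : C ((m : ℝ) + (α + 1) + 1) = C (α + 1) + C ((m : ℝ) + 1) := by
    rw [← C_add]; ring_nf
  rw [show α + 2 = α + 1 + 1 by ring, X_mul_laguerre_add_one, laguerre_add_one_succ, hC]
  ring

noncomputable def interlacingQuadratic (α : ℝ) (n : ℕ) (t : ℝ) : ℝ :=
  n * t ^ 2 + 2 * n * (α + 2) * t - (α + 1) * (α + 2) * (α + 3)

theorem pow_three_mul_eval_laguerre_add_four {α t : ℝ} {m : ℕ}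
    (ht : (laguerre α (m + 1)).eval t = 0) :
    t ^ 3 * (laguerre (α + 4) m).eval t =
      interlacingQuadratic α (m + 1) t * (derivative (laguerre α (m + 1))).eval t := by
  have e1 := congrArg (eval t) (X_mul_laguerre_add_two α m)
  have e2 := congrArg (eval t) (X_mul_laguerre_add_two (α + 1) m)
  have e3 := congrArg (eval t) (X_mul_laguerre_add_two (α + 2) m)
  have e4 := congrArg (eval t) (laguerre_add_one_succ α m)
  have e5 := congrArg (eval t) (laguerre_add_one_succ (α + 1) m)
  have hd := congrArg (eval t) (derivative_laguerre_succ α m)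
  rw [show α + 1 + 2 = α + 3 by ring, show α + 1 + 1 = α + 2 by ring] at e2
  rw [show α + 2 + 2 = α + 4 by ring, show α + 2 + 1 = α + 3 by ring] at e3
  rw [show α + 1 + 1 = α + 2 by ring] at e5
  simp only [eval_mul, eval_add, eval_sub, eval_neg, eval_X, eval_C] at e1 e2 e3 e4 e5 hd
  rw [hd, interlacingQuadratic]
  rw [ht] at e1 e4
  push_cast
  -- lower the parameter of `t³ L_m^{(α+4)}` to `α + 1` by `e3`, `e2`, `e1`, trading each
  -- `L_{m+1}^{(α+j)}` for lower terms by `e5`, `e4`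
  linear_combination t ^ 2 * e3 + ((α + 3) * t) * e2 +
    ((α + 2) * (α + 3) - ((m : ℝ) + 1) * t) * e1 -
    (((m : ℝ) + 1) * (α + 3) * t + ((m : ℝ) + 1) * t ^ 2) * e4 - ((m : ℝ) + 1) * t ^ 2 * e5

theorem interlacingQuadratic_mul_pos {α q s t : ℝ} {n : ℕ} (hn : n ≠ 0) (hα : 0 ≤ α + 2)
    (hq : 0 < q) (hqroot : interlacingQuadratic α n q = 0) (hs : 0 < s) (ht : 0 < t)
    (hst : 0 < (s - q) * (t - q)) :
    0 < interlacingQuadratic α n s * interlacingQuadratic α n t := by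
  have hfac : ∀ r, interlacingQuadratic α n r = n * (r - q) * (r + q + 2 * (α + 2)) := fun r => by
    unfold interlacingQuadratic at hqroot ⊢
    linear_combination hqroot
  have hn' : (0 : ℝ) < n := by positivity
  rw [hfac, hfac, show ∀ a b c d e f : ℝ, a * b * c * (d * e * f) = a * d * (b * e) * (c * f) by
    intros; ring]
  exact mul_pos (mul_pos (mul_pos hn' hn') hst) (by positivity)

theorem sub_mul_sub_pos_of_lt_or_lt {x : ℕ → ℝ} {n : ℕ} (hx : MonotoneOn x (Icc 1 n)) {q : ℝ}
    (hq : q < x 1 ∨ x n < q) {i k : ℕ} (hi : i ∈ Icc 1 n) (hk : k ∈ Icc 1 n) :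
    0 < (x i - q) * (x k - q) := by
  have h1 : (1 : ℕ) ∈ (Icc 1 n : Set ℕ) := by
    simp only [coe_Icc, Set.mem_Icc, mem_Icc] at hi ⊢; omega
  have hn : n ∈ (Icc 1 n : Set ℕ) := by simp only [coe_Icc, Set.mem_Icc, mem_Icc] at hi ⊢; omega
  rcases hq with hq | hq
  · have := hx h1 hi (mem_Icc.1 hi).1
    have := hx h1 hk (mem_Icc.1 hk).1
    exact mul_pos (by linarith) (by linarith)
  · have := hx hi hn (mem_Icc.1 hi).2
    have := hx hk hn (mem_Icc.1 hk).2
    exact mul_pos_of_neg_of_neg (by linarith) (by linarith)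

theorem eval_laguerre_add_four_mul_neg {α q s t : ℝ} {m : ℕ} (hα : 0 ≤ α + 2) (hq : 0 < q)
    (hqroot : interlacingQuadratic α (m + 1) q = 0) (hs : 0 < s) (ht : 0 < t)
    (hst : 0 < (s - q) * (t - q))
    (hLs : (laguerre α (m + 1)).eval s = 0) (hLt : (laguerre α (m + 1)).eval t = 0)
    (hderiv : (derivative (laguerre α (m + 1))).eval s *
      (derivative (laguerre α (m + 1))).eval t < 0) :
    (laguerre (α + 4) m).eval s * (laguerre (α + 4) m).eval t < 0 := by
  refine neg_of_mul_neg_right ?_ (by positivity : 0 ≤ s ^ 3 * t ^ 3)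
  calc s ^ 3 * t ^ 3 * ((laguerre (α + 4) m).eval s * (laguerre (α + 4) m).eval t)
      = (interlacingQuadratic α (m + 1) s * interlacingQuadratic α (m + 1) t) *
          ((derivative (laguerre α (m + 1))).eval s *
            (derivative (laguerre α (m + 1))).eval t) := by
        rw [mul_mul_mul_comm, pow_three_mul_eval_laguerre_add_four hLs,
          pow_three_mul_eval_laguerre_add_four hLt, mul_mul_mul_comm]
    _ < 0 := mul_neg_of_pos_of_neg
        (interlacingQuadratic_mul_pos m.succ_ne_zero hα hq hqroot hs ht hst) hderiv

theorem laguerre_interlacing_deg_pred_param_four_of_root_outside_general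
    (α : ℝ) (hα : -1 < α) (n : ℕ)
    (x : ℕ → ℝ)
    (hxpos : ∀ i ∈ Finset.Icc 1 n, 0 < x i)
    (hxmono : ∀ i ∈ Finset.Icc 1 n, ∀ j ∈ Finset.Icc 1 n, i < j → x i < x j)
    (hxroots : ∀ t : ℝ, (laguerre α n).eval t = 0 ↔ ∃ i ∈ Finset.Icc 1 n, x i = t)
    (X : ℕ → ℝ)
    (hXmono : ∀ i ∈ Finset.Icc 1 (n - 1), ∀ j ∈ Finset.Icc 1 (n - 1), i < j → X i < X j)
    (hXroots : ∀ t : ℝ, (laguerre (α + 4) (n - 1)).eval t = 0 ↔ ∃ i ∈ Finset.Icc 1 (n - 1), X i = t)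
    (q : ℝ) (hqpos : 0 < q)
    (hqroot : (n : ℝ) * q ^ 2 + 2 * (n : ℝ) * (α + 2) * q - (α + 1) * (α + 2) * (α + 3) = 0)
    (hq : q < x 1 ∨ x n < q) :
    ∀ i ∈ Finset.Icc 1 (n - 1), x i < X i ∧ X i < x (i + 1) := by
  rcases n with _ | m
  · simp
  simp only [Nat.add_sub_cancel] at hXmono hXroots ⊢
  have hx : StrictMonoOn x (Icc 1 (m + 1)) := hxmono
  have hroot : ∀ i ∈ Icc 1 (m + 1), (laguerre α (m + 1)).eval (x i) = 0 :=
    fun i hi => (hxroots _).2 ⟨i, hi, rfl⟩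
  refine forall_mem_Ioo_of_forall_exists_mem_Ioo hx.monotoneOn hXmono fun i hi => ?_
  have hi₀ : i ∈ Icc 1 (m + 1) := by simp only [mem_Icc] at hi ⊢; omega
  have hi₁ : i + 1 ∈ Icc 1 (m + 1) := by simp only [mem_Icc] at hi ⊢; omega
  have hderiv := eval_derivative_mul_eval_derivative_succ_neg (laguerre_coeff_self_ne_zero α _)
    (natDegree_laguerre_le α _) hx hroot (i := i) (by simp only [mem_Icc, mem_Ico] at hi ⊢; omega)
  have hsign := eval_laguerre_add_four_mul_neg (by linarith) hqpos hqroot (hxpos i hi₀)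
    (hxpos (i + 1) hi₁) (sub_mul_sub_pos_of_lt_or_lt hx.monotoneOn hq hi₀ hi₁) (hroot i hi₀)
    (hroot (i + 1) hi₁) hderiv
  obtain ⟨t, ht, ht₀⟩ := exists_mem_Ioo_eq_zero_of_mul_neg (laguerre (α + 4) m).continuous
    (hx hi₀ hi₁ i.lt_succ_self).le hsign
  obtain ⟨j, hj, rfl⟩ := (hXroots t).1 ht₀
  exact ⟨j, hj, ht⟩

theorem laguerre_interlacing_deg_pred_param_four_of_root_outside
    (α : ℝ) (hα : -1 < α) (n : ℕ) (hn : 4 ≤ n)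
    (hnc : ∀ t : ℝ, ¬((laguerre (α + 4) (n - 1)).eval t = 0 ∧ (laguerre α n).eval t = 0))
    (x : ℕ → ℝ)
    (hxpos : ∀ i ∈ Finset.Icc 1 n, 0 < x i)
    (hxmono : ∀ i ∈ Finset.Icc 1 n, ∀ j ∈ Finset.Icc 1 n, i < j → x i < x j)
    (hxroots : ∀ t : ℝ, (laguerre α n).eval t = 0 ↔ ∃ i ∈ Finset.Icc 1 n, x i = t)
    (X : ℕ → ℝ)
    (hXpos : ∀ i ∈ Finset.Icc 1 (n - 1), 0 < X i)
    (hXmono : ∀ i ∈ Finset.Icc 1 (n - 1), ∀ j ∈ Finset.Icc 1 (n - 1), i < j → X i < X j)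
    (hXroots : ∀ t : ℝ, (laguerre (α + 4) (n - 1)).eval t = 0 ↔ ∃ i ∈ Finset.Icc 1 (n - 1), X i = t)
    (q : ℝ) (hqpos : 0 < q)
    (hqroot : (n : ℝ) * q ^ 2 + 2 * (n : ℝ) * (α + 2) * q - (α + 1) * (α + 2) * (α + 3) = 0)
    (hq : q < x 1 ∨ x n < q) :
    ∀ i ∈ Finset.Icc 1 (n - 1), x i < X i ∧ X i < x (i + 1) :=
  laguerre_interlacing_deg_pred_param_four_of_root_outside_general α hα n x hxpos hxmono hxroots X
    hXmono hXroots q hqpos hqroot hq
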